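/- Let A be a positive bounded operator on a Hilbert space H and S a closed subspace. The following are equivalent: (1) R(A) = R([S]A) + R(A − [S]A) (the pair ([S]A, A − [S]A) has range additivity); (2) R([S]A) ⊆ R(A); (3) with M = (A^{1/2})^{-1}(S), R(A^{1/2}) = (M ∩ R(A^{1/2})) ⊕ (M^⊥ ∩ R(A^{1/2})). -/

import Mathlib

/-! With `M = sA⁻¹(S)` and `P` the orthogonal projection onto `M`, the shorted operator is
`sA P sA`: if `0 ≤ X ≤ A` and `R(X) ⊆ S`, then `⟪X x, x⟫ ≤ ‖sA (x + s)‖²` for every `s ∈ Sᗮ`, and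
`sA(Sᗮ)` is dense in `Mᗮ`, so `⟪X x, x⟫ ≤ dist(sA x, Mᗮ)² = ‖P sA x‖²`.
Since `A = T + (A - T)`, (1) ⟺ (2) is pure algebra. Since `ker sA ⊆ M`, both `P sA x` and
`sA z` lie in `(ker sA)ᗮ`, where `sA` is injective; hence `R(sA P sA) ⊆ R(sA²)` iff `P` maps
`R(sA)` into itself, which is (3). -/

open ContinuousLinearMap

/-- `P` is the orthogonal projection onto the closed subspace `S`: a selfadjoint
idempotent with range `S`. -/
def IsOrthoProj {E : Type*} [NormedAddCommGroup E] [InnerProductSpace ℂ E] [CompleteSpace E]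
    (P : E →L[ℂ] E) (S : Submodule ℂ E) : Prop :=
  IsIdempotentElem P ∧ IsSelfAdjoint P ∧ LinearMap.range (P : E →ₗ[ℂ] E) = S

/-- `T` is the Krein shorted operator `[S]A`: the Löwner-maximum of
`{X ∈ L(H)⁺ : X ≤ A, R(X) ⊆ S}`. -/
def IsShorted {E : Type*} [NormedAddCommGroup E] [InnerProductSpace ℂ E] [CompleteSpace E]
    (S : Submodule ℂ E) (A T : E →L[ℂ] E) : Prop :=
  T.IsPositive ∧ (A - T).IsPositive ∧ LinearMap.range (T : E →ₗ[ℂ] E) ≤ S ∧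
    ∀ X : E →L[ℂ] E, X.IsPositive → (A - X).IsPositive → LinearMap.range (X : E →ₗ[ℂ] E) ≤ S →
      (T - X).IsPositive

variable {H : Type*} [NormedAddCommGroup H] [InnerProductSpace ℂ H] [CompleteSpace H]


open scoped InnerProduct InnerProductSpace

namespace LinearMap

variable {R M N : Type*} [Ring R] [AddCommGroup M] [AddCommGroup N] [Module R M] [Module R N]

theorem range_eq_range_sup_range_sub_iff (f g : M →ₗ[R] N) :
    range f = range g ⊔ range (f - g) ↔ range g ≤ range f := by
  refine ⟨fun h => h ▸ le_sup_left, fun h => le_antisymm ?_ (sup_le h ?_)⟩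
  · simpa using range_add_le g (f - g)
  · calc range (f - g) = range (f + -g) := by rw [sub_eq_add_neg]
      _ ≤ range f ⊔ range (-g) := range_add_le _ _
      _ = range f := by rw [range_neg, sup_eq_left.mpr h]

end LinearMap

section InnerProductSpace

variable {𝕜 E F : Type*} [RCLike 𝕜] [NormedAddCommGroup E] [InnerProductSpace 𝕜 E]
  [NormedAddCommGroup F] [InnerProductSpace 𝕜 F]

theorem Submodule.eq_inf_sup_orthogonal_inf_iff (K : Submodule 𝕜 E) [K.HasOrthogonalProjection]
    (R : Submodule 𝕜 E) :
    R = K ⊓ R ⊔ Kᗮ ⊓ R ↔ ∀ r ∈ R, K.starProjection r ∈ R := by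
  refine ⟨fun h r hr => ?_,
    fun h => le_antisymm (fun r hr => ?_) (sup_le inf_le_right inf_le_right)⟩
  · obtain ⟨m, hm, m', hm', rfl⟩ := Submodule.mem_sup.mp (h.le hr)
    rw [K.eq_starProjection_of_mem_orthogonal' hm.1 hm'.1 rfl]
    exact hm.2
  · exact Submodule.mem_sup.mpr ⟨_, ⟨K.starProjection_apply_mem r, h r hr⟩, _,
      ⟨K.sub_starProjection_mem_orthogonal r, R.sub_mem hr (h r hr)⟩, add_sub_cancel _ _⟩

namespace ContinuousLinearMap

theorem eq_of_apply_eq_of_mem_orthogonal_ker (B : E →L[𝕜] F) {u w : E}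
    (hu : u ∈ B.kerᗮ) (hw : w ∈ B.kerᗮ) (h : B u = B w) : u = w := by
  have : u - w ∈ B.ker ⊓ B.kerᗮ := ⟨by simp [h], Submodule.sub_mem _ hu hw⟩
  simpa [Submodule.inf_orthogonal_eq_bot, sub_eq_zero] using this

theorem reApplyInnerSelf_sub (A X : E →L[𝕜] E) (x : E) :
    (A - X).reApplyInnerSelf x = A.reApplyInnerSelf x - X.reApplyInnerSelf x := by
  simp only [reApplyInnerSelf_apply, sub_apply, inner_sub_left, map_sub]

theorem reApplyInnerSelf_le_of_le {X A : E →L[𝕜] E} (h : X ≤ A) (x : E) :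
    X.reApplyInnerSelf x ≤ A.reApplyInnerSelf x :=
  sub_nonneg.mp (reApplyInnerSelf_sub A X x ▸ h.2 x)

theorem reApplyInnerSelf_add_of_mem_orthogonal {X : E →L[𝕜] E} (hX : X.IsSymmetric)
    {S : Submodule 𝕜 E} (hXS : X.range ≤ S) (x : E) {s : E} (hs : s ∈ Sᗮ) :
    X.reApplyInnerSelf (x + s) = X.reApplyInnerSelf x + X.reApplyInnerSelf s := by
  have hXx : X x ∈ S := hXS ⟨x, rfl⟩
  have h₁ : ⟪X x, s⟫_𝕜 = 0 := Submodule.inner_right_of_mem_orthogonal hXx hs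
  have h₂ : ⟪X s, x⟫_𝕜 = 0 := (hX s x).trans (Submodule.inner_left_of_mem_orthogonal hXx hs)
  simp only [reApplyInnerSelf_apply, map_add, inner_add_left, inner_add_right, h₁, h₂, add_zero,
    zero_add]

theorem reApplyInnerSelf_le_of_mem_orthogonal {X A : E →L[𝕜] E} (hX : X.IsPositive)
    (hXA : X ≤ A) {S : Submodule 𝕜 E} (hXS : X.range ≤ S) (x : E) {s : E} (hs : s ∈ Sᗮ) :
    X.reApplyInnerSelf x ≤ A.reApplyInnerSelf (x + s) :=
  calc X.reApplyInnerSelf x ≤ X.reApplyInnerSelf x + X.reApplyInnerSelf s :=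
        le_add_of_nonneg_right (hX.2 s)
    _ = X.reApplyInnerSelf (x + s) := (reApplyInnerSelf_add_of_mem_orthogonal hX.1 hXS x hs).symm
    _ ≤ A.reApplyInnerSelf (x + s) := reApplyInnerSelf_le_of_le hXA _

theorem reApplyInnerSelf_comp_self {B : E →L[𝕜] E} (hB : B.IsSymmetric) (x : E) :
    (B ∘L B).reApplyInnerSelf x = ‖B x‖ ^ 2 := by
  have hsymm : ⟪B (B x), x⟫_𝕜 = ⟪B x, B x⟫_𝕜 := hB _ _
  rw [reApplyInnerSelf_apply, comp_apply, hsymm, inner_self_eq_norm_sq]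

theorem reApplyInnerSelf_comp_starProjection_comp {B : E →L[𝕜] E} (hB : B.IsSymmetric)
    (K : Submodule 𝕜 E) [K.HasOrthogonalProjection] (x : E) :
    (B ∘L K.starProjection ∘L B).reApplyInnerSelf x = ‖K.starProjection (B x)‖ ^ 2 := by
  have hsymm : ⟪B (K.starProjection (B x)), x⟫_𝕜 = ⟪K.starProjection (B x), B x⟫_𝕜 := hB _ _
  rw [reApplyInnerSelf_apply, comp_apply, comp_apply, hsymm, K.re_inner_starProjection_eq_normSq,
    K.starProjection_apply, Submodule.coe_norm]

variable [CompleteSpace E]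

theorem range_le_orthogonal_ker {B : E →L[𝕜] E} (hB : IsSelfAdjoint B) : B.range ≤ B.kerᗮ := by
  rw [orthogonal_ker, hB.adjoint_eq]
  exact Submodule.le_topologicalClosure _

theorem range_comp_starProjection_comp_le_iff {B : E →L[𝕜] E} (hB : IsSelfAdjoint B)
    {K : Submodule 𝕜 E} [K.HasOrthogonalProjection] (hK : B.ker ≤ K) :
    (B ∘L K.starProjection ∘L B).range ≤ (B ∘L B).range ↔
      ∀ r ∈ B.range, K.starProjection r ∈ B.range := by
  constructor
  · rintro h _ ⟨x, rfl⟩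
    obtain ⟨z, hz⟩ := h ⟨x, rfl⟩
    have hBx : B x ∈ B.kerᗮ := range_le_orthogonal_ker hB ⟨x, rfl⟩
    have hPBx : K.starProjection (B x) ∈ B.kerᗮ := by
      simpa using Submodule.sub_mem _ hBx
        (Submodule.orthogonal_le hK (K.sub_starProjection_mem_orthogonal (B x)))
    exact ⟨z, eq_of_apply_eq_of_mem_orthogonal_ker B (range_le_orthogonal_ker hB ⟨z, rfl⟩) hPBx hz⟩
  · rintro h _ ⟨x, rfl⟩
    obtain ⟨u, hu⟩ := h _ ⟨x, rfl⟩
    exact ⟨u, congrArg B hu⟩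

theorem orthogonal_map_adjoint [CompleteSpace F] (T : E →L[𝕜] F) (N : Submodule 𝕜 F) :
    (N.map (T† : F →ₗ[𝕜] E))ᗮ = Nᗮ.comap (T : E →ₗ[𝕜] F) := by
  ext u
  simp [Submodule.mem_orthogonal, adjoint_inner_left]

theorem orthogonal_comap [CompleteSpace F] (T : E →L[𝕜] F) {S : Submodule 𝕜 F}
    (hS : IsClosed (S : Set F)) :
    (S.comap (T : E →ₗ[𝕜] F))ᗮ = (Sᗮ.map (T† : F →ₗ[𝕜] E)).topologicalClosure := by
  rw [← Submodule.orthogonal_orthogonal_eq_closure, orthogonal_map_adjoint,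
    Submodule.orthogonal_orthogonal_eq_closure, hS.submodule_topologicalClosure_eq]

theorem reApplyInnerSelf_le_norm_starProjection_sq {B X : E →L[𝕜] E} (hB : IsSelfAdjoint B)
    {S : Submodule 𝕜 E} (hS : IsClosed (S : Set E))
    [(S.comap (B : E →ₗ[𝕜] E)).HasOrthogonalProjection] (hX : X.IsPositive) (hXB : X ≤ B ∘L B)
    (hXS : X.range ≤ S) (x : E) :
    X.reApplyInnerSelf x ≤ ‖(S.comap (B : E →ₗ[𝕜] E)).starProjection (B x)‖ ^ 2 := by
  set K := S.comap (B : E →ₗ[𝕜] E)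
  set bound : Set E := {w | X.reApplyInnerSelf x ≤ ‖B x + w‖ ^ 2}
  have hbound : (Sᗮ.map (B : E →ₗ[𝕜] E) : Set E) ⊆ bound := by
    rintro _ ⟨s, hs, rfl⟩
    simpa [bound, ← map_add, reApplyInnerSelf_comp_self hB.isSymmetric] using
      reApplyInnerSelf_le_of_mem_orthogonal hX hXB hXS x hs
  have hclosed : IsClosed bound := isClosed_le continuous_const (by fun_prop)
  have hdense : (Kᗮ : Set E) ⊆ closure (Sᗮ.map (B : E →ₗ[𝕜] E)) := by
    rw [← Submodule.topologicalClosure_coe, ← hB.adjoint_eq, ← B.orthogonal_comap hS]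
  have hw : K.starProjection (B x) - B x ∈ Kᗮ := by
    simpa using neg_mem (K.sub_starProjection_mem_orthogonal (B x))
  simpa [bound] using hclosed.closure_subset_iff.mpr hbound (hdense hw)

end ContinuousLinearMap

end InnerProductSpace

section Shorted

variable {E : Type*} [NormedAddCommGroup E] [InnerProductSpace ℂ E] [CompleteSpace E]

theorem IsShorted.unique {S : Submodule ℂ E} {A T T' : E →L[ℂ] E} (h : IsShorted S A T)
    (h' : IsShorted S A T') : T = T' :=
  le_antisymm (h'.2.2.2 T h.1 h.2.1 h.2.2.1) (h.2.2.2 T' h'.1 h'.2.1 h'.2.2.1)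

theorem isShorted_comp_starProjection_comp {B : E →L[ℂ] E} (hB : B.IsPositive)
    {S : Submodule ℂ E} (hS : IsClosed (S : Set E))
    [(S.comap (B : E →ₗ[ℂ] E)).HasOrthogonalProjection] :
    IsShorted S (B ∘L B) (B ∘L (S.comap (B : E →ₗ[ℂ] E)).starProjection ∘L B) := by
  set K := S.comap (B : E →ₗ[ℂ] E)
  have hconj : ∀ U : Submodule ℂ E, [U.HasOrthogonalProjection] →
      (B ∘L U.starProjection ∘L B).IsPositive := fun U _ => by
    simpa [hB.isSelfAdjoint.adjoint_eq] using
      (IsPositive.of_isStarProjection isStarProjection_starProjection).conj_adjoint B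
  have hcompl : B ∘L B - B ∘L K.starProjection ∘L B = B ∘L Kᗮ.starProjection ∘L B := by
    rw [K.starProjection_orthogonal']
    ext
    simp
  refine ⟨hconj K, hcompl ▸ hconj Kᗮ, ?_, fun X hX hXB hXS => ?_⟩
  · rintro _ ⟨x, rfl⟩
    exact K.starProjection_apply_mem (B x)
  · refine isPositive_def'.mpr ⟨(hconj K).isSelfAdjoint.sub hX.isSelfAdjoint, fun x => ?_⟩
    rw [reApplyInnerSelf_sub, sub_nonneg,
      reApplyInnerSelf_comp_starProjection_comp hB.isSymmetric]
    exact reApplyInnerSelf_le_norm_starProjection_sq hB.isSelfAdjoint hS hX hXB hXS x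

end Shorted

theorem shorted_range_additivity_tfae_general (A sA : H →L[ℂ] H)
    (hsA : sA.IsPositive) (hsA2 : sA ∘L sA = A)
    (S : Submodule ℂ H) (hS : IsClosed (S : Set H))
    (T : H →L[ℂ] H) (hT : IsShorted S A T) :
    List.TFAE
      [LinearMap.range (A : H →ₗ[ℂ] H) = LinearMap.range (T : H →ₗ[ℂ] H) ⊔
         LinearMap.range ((A - T : H →L[ℂ] H) : H →ₗ[ℂ] H),
       LinearMap.range (T : H →ₗ[ℂ] H) ≤ LinearMap.range (A : H →ₗ[ℂ] H),
       LinearMap.range (sA : H →ₗ[ℂ] H) =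
         (Submodule.comap (sA : H →ₗ[ℂ] H) S ⊓ LinearMap.range (sA : H →ₗ[ℂ] H)) ⊔
           ((Submodule.comap (sA : H →ₗ[ℂ] H) S)ᗮ ⊓ LinearMap.range (sA : H →ₗ[ℂ] H))] := by
  set K := S.comap (sA : H →ₗ[ℂ] H)
  have : CompleteSpace K := (hS.preimage sA.continuous).completeSpace_coe
  subst hsA2
  obtain rfl : T = sA ∘L K.starProjection ∘L sA :=
    hT.unique (isShorted_comp_starProjection_comp hsA hS)
  have hker : sA.ker ≤ K := fun x hx => by simp [K, LinearMap.mem_ker.mp hx]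
  tfae_have 1 ↔ 2 := by
    rw [toLinearMap_sub]
    exact LinearMap.range_eq_range_sup_range_sub_iff _ _
  tfae_have 2 ↔ 3 := by
    rw [range_comp_starProjection_comp_le_iff hsA.isSelfAdjoint hker,
      K.eq_inf_sup_orthogonal_inf_iff]
  tfae_finish

/-- TFAE: (1) `R(A) = R([S]A) + R(A - [S]A)`; (2) `R([S]A) ⊆ R(A)`;
(3) `R(A^{1/2}) = (M ∩ R(A^{1/2})) ⊕ (M^⊥ ∩ R(A^{1/2}))` where `M = (A^{1/2})⁻¹(S)`.
Here `sA` is the positive square root of `A` and `T = [S]A`. -/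
theorem shorted_range_additivity_tfae (A sA : H →L[ℂ] H) (hA : A.IsPositive)
    (hsA : sA.IsPositive) (hsA2 : sA ∘L sA = A)
    (S : Submodule ℂ H) (hS : IsClosed (S : Set H))
    (T : H →L[ℂ] H) (hT : IsShorted S A T) :
    List.TFAE
      [LinearMap.range (A : H →ₗ[ℂ] H) = LinearMap.range (T : H →ₗ[ℂ] H) ⊔
         LinearMap.range ((A - T : H →L[ℂ] H) : H →ₗ[ℂ] H),
       LinearMap.range (T : H →ₗ[ℂ] H) ≤ LinearMap.range (A : H →ₗ[ℂ] H),
       LinearMap.range (sA : H →ₗ[ℂ] H) =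
         (Submodule.comap (sA : H →ₗ[ℂ] H) S ⊓ LinearMap.range (sA : H →ₗ[ℂ] H)) ⊔
           ((Submodule.comap (sA : H →ₗ[ℂ] H) S)ᗮ ⊓ LinearMap.range (sA : H →ₗ[ℂ] H))] :=
  shorted_range_additivity_tfae_general A sA hsA hsA2 S hS T hT
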